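/- arXiv:0806.2057 — 3 statements merged into one kernel-verified Lean document; each statement's English description precedes it below -/
import Mathlib

section
/- If X is a base of a simply laced root system Φ (i.e., X ⊆ Φ is linearly independent, pairwise inner products of distinct elements of X are ≤ 0, and every element of Φ is an integer linear combination of X), then the set of integer linear combinations of X having norm √2 is exactly Φ. -/
open RealInnerProductSpace

variable {E : Type*} [NormedAddCommGroup E] [InnerProductSpace ℝ E]

/-- A simply laced root system: a nonempty finite set of vectors with `⟪x,x⟫ = 2`,
integer pairwise inner products, closed under `x ↦ x - ⟪x,y⟫ y`. -/
def IsSLRS (Φ : Set E) : Prop :=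
  Φ.Nonempty ∧ Φ.Finite ∧
    ∀ x ∈ Φ, ∀ y ∈ Φ,
      ⟪x, x⟫ = 2 ∧ (∃ m : ℤ, ⟪x, y⟫ = (m : ℝ)) ∧ x - ⟪x, y⟫ • y ∈ Φ

/-- A base of a simply laced root system: a linearly independent subset with nonpositive
inner products between distinct elements, whose integer span contains `Φ`. -/
def IsBase (Φ X : Set E) : Prop :=
  X ⊆ Φ ∧ LinearIndependent ℝ ((↑) : X → E) ∧
    (∀ x ∈ X, ∀ y ∈ X, x ≠ y → ⟪x, y⟫ ≤ 0) ∧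
    ∀ v ∈ Φ, v ∈ Submodule.span ℤ X

/-!
Since `Φ = -Φ`, a vector `v` of the `ℤ`-span of `Φ` is a sum of roots. If `⟪v, v⟫ = 2`, some
summand `x` has `⟪v, x⟫` a positive integer. If it is at least `2`, Cauchy–Schwarz forces `v = x`;
if it is `1`, then `v - x` is a shorter sum of roots of norm `2`, hence a root by induction, and
`v = (v - x) + x` is the reflection of `v - x` in `x`.
-/

lemma real_inner_multiset_sum_right (v : E) (s : Multiset E) :
    ⟪v, s.sum⟫ = (s.map (⟪v, ·⟫)).sum :=
  map_multiset_sum (innerₛₗ ℝ v) s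

lemma exists_mem_real_inner_multiset_sum_pos {s : Multiset E} (hs : 0 < ⟪s.sum, s.sum⟫) :
    ∃ x ∈ s, 0 < ⟪s.sum, x⟫ := by
  by_contra! h
  have : (s.map (⟪s.sum, ·⟫)).sum ≤ (s.map fun _ => (0 : ℝ)).sum :=
    Multiset.sum_map_le_sum_map _ _ h
  rw [← real_inner_multiset_sum_right, Multiset.map_const', Multiset.sum_replicate,
    smul_zero] at this
  linarith

lemma eq_of_real_inner_self_eq_of_le_inner {x v : E} (hv : ⟪v, v⟫ = ⟪x, x⟫)
    (hxv : ⟪x, x⟫ ≤ ⟪v, x⟫) : v = x := by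
  have hle : ⟪v - x, v - x⟫ ≤ 0 := by
    rw [inner_sub_sub_self, hv, real_inner_comm v x]
    linarith
  exact sub_eq_zero.mp (inner_self_eq_zero.mp (le_antisymm hle real_inner_self_nonneg))

namespace IsSLRS

variable {Φ : Set E}

lemma inner_self_eq_two (hΦ : IsSLRS Φ) {x : E} (hx : x ∈ Φ) : ⟪x, x⟫ = 2 :=
  (hΦ.2.2 x hx x hx).1

lemma neg_mem (hΦ : IsSLRS Φ) {x : E} (hx : x ∈ Φ) : -x ∈ Φ := by
  have h := (hΦ.2.2 x hx x hx).2.2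
  rwa [hΦ.inner_self_eq_two hx, two_smul, sub_add_cancel_left] at h

lemma add_mem_of_inner_eq_neg_one (hΦ : IsSLRS Φ) {x y : E} (hx : x ∈ Φ) (hy : y ∈ Φ)
    (hxy : ⟪x, y⟫ = -1) : x + y ∈ Φ := by
  have h := (hΦ.2.2 x hx y hy).2.2
  rwa [hxy, neg_one_smul, sub_neg_eq_add] at h

lemma exists_int_inner_multiset_sum (hΦ : IsSLRS Φ) {x : E} (hx : x ∈ Φ) {s : Multiset E}
    (hs : ∀ y ∈ s, y ∈ Φ) : ∃ m : ℤ, ⟪x, s.sum⟫ = m := by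
  have : ⟪x, s.sum⟫ ∈ (Int.castAddHom ℝ).range := by
    rw [real_inner_multiset_sum_right]
    refine AddSubgroup.multiset_sum_mem _ _ fun r hr => ?_
    obtain ⟨y, hy, rfl⟩ := Multiset.mem_map.mp hr
    obtain ⟨m, hm⟩ := (hΦ.2.2 x hx y (hs y hy)).2.1
    exact ⟨m, hm.symm⟩
  obtain ⟨m, hm⟩ := this
  exact ⟨m, hm.symm⟩

lemma multiset_sum_mem (hΦ : IsSLRS Φ) (s : Multiset E) (hs : ∀ x ∈ s, x ∈ Φ)
    (hnorm : ⟪s.sum, s.sum⟫ = 2) : s.sum ∈ Φ := by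
  classical
  induction s using Multiset.strongInductionOn with
  | ih s ih =>
  obtain ⟨x, hxs, hpos⟩ := exists_mem_real_inner_multiset_sum_pos (hnorm ▸ two_pos)
  have hxΦ := hs x hxs
  have hxx := hΦ.inner_self_eq_two hxΦ
  obtain ⟨k, hk⟩ := hΦ.exists_int_inner_multiset_sum hxΦ hs
  rw [real_inner_comm] at hk
  rw [hk] at hpos
  obtain hk1 | hk2 : k = 1 ∨ 2 ≤ k := by
    have : 0 < k := by exact_mod_cast hpos
    omega
  · set t := s.erase x
    have hsum : t.sum = s.sum - x := eq_sub_of_add_eq' (Multiset.sum_erase hxs)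
    have hkx : ⟪s.sum, x⟫ = 1 := by rw [hk, hk1, Int.cast_one]
    have ht : t.sum ∈ Φ := by
      refine ih t (Multiset.erase_lt.mpr hxs) (fun y hy => hs y (Multiset.mem_of_mem_erase hy)) ?_
      rw [hsum, inner_sub_sub_self, hnorm, hxx, real_inner_comm s.sum x, hkx]
      norm_num
    have htx : ⟪t.sum, x⟫ = -1 := by
      rw [hsum, inner_sub_left, hkx, hxx]
      norm_num
    simpa [hsum] using hΦ.add_mem_of_inner_eq_neg_one ht hxΦ htx
  · have : s.sum = x := eq_of_real_inner_self_eq_of_le_inner (hnorm.trans hxx.symm) <| by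
      rw [hk, hxx]
      exact_mod_cast hk2
    exact this ▸ hxΦ

lemma exists_multiset_of_mem_span (hΦ : IsSLRS Φ) {v : E} (hv : v ∈ Submodule.span ℤ Φ) :
    ∃ s : Multiset E, (∀ x ∈ s, x ∈ Φ) ∧ s.sum = v := by
  have hneg : -Φ ⊆ Φ := fun x hx => by simpa using hΦ.neg_mem hx
  rw [← Submodule.mem_toAddSubgroup, Submodule.span_int_eq_addSubgroupClosure,
    ← AddSubgroup.mem_toAddSubmonoid, AddSubgroup.closure_toAddSubmonoid,
    Set.union_eq_left.mpr hneg] at hv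
  exact AddSubmonoid.exists_multiset_of_mem_closure hv

lemma mem_of_mem_span_of_inner_self_eq_two (hΦ : IsSLRS Φ) {v : E} (hv : v ∈ Submodule.span ℤ Φ)
    (hnorm : ⟪v, v⟫ = 2) : v ∈ Φ := by
  obtain ⟨s, hs, rfl⟩ := hΦ.exists_multiset_of_mem_span hv
  exact hΦ.multiset_sum_mem s hs hnorm

end IsSLRS

theorem base_generates {Φ X : Set E} (hΦ : IsSLRS Φ) (hX : IsBase Φ X) :
    {v : E | v ∈ Submodule.span ℤ X ∧ ⟪v, v⟫ = 2} = Φ := by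
  ext v
  refine ⟨fun ⟨hv, hnorm⟩ => ?_, fun hv => ⟨hX.2.2.2 v hv, hΦ.inner_self_eq_two hv⟩⟩
  exact hΦ.mem_of_mem_span_of_inner_self_eq_two (Submodule.span_mono hX.1 hv) hnorm
end

section
/- Let X be a finite set of vectors in a real inner product space with ‖v‖² = 2 for all v ∈ X and ⟨v,w⟩ ∈ ℤ for all v, w ∈ X, and suppose X is nonempty. Then X̂ = {x in the ℤ-span of X : ‖x‖² = 2} is a simply laced root system. -/
/-!
Integrality of inner products passes from `X` to its `ℤ`-span by bilinearity, so `X̂` has integral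
inner products and is stable under `x ↦ x - ⟪x,y⟫ y`, which for `⟪y,y⟫ = 2` is the orthogonal
reflection in `y` and so preserves `⟪x,x⟫`. For finiteness, a vector of the span is determined by
its inner products with the finitely many elements of `X`, and for vectors of bounded norm these
are integers bounded by Cauchy–Schwarz.
-/

open RealInnerProductSpace

variable {E : Type*} [NormedAddCommGroup E] [InnerProductSpace ℝ E]

theorem finite_setOf_exists_intCast_eq_and_abs_le (C : ℝ) :
    {t : ℝ | (∃ m : ℤ, t = m) ∧ |t| ≤ C}.Finite := by
  refine ((Set.finite_Icc (-⌈C⌉) ⌈C⌉).image ((↑) : ℤ → ℝ)).subset ?_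
  rintro _ ⟨⟨m, rfl⟩, hm⟩
  have hC : (m : ℝ) ≤ ⌈C⌉ ∧ -(⌈C⌉ : ℝ) ≤ m := by
    constructor <;> linarith [abs_le.mp hm, Int.le_ceil C]
  exact ⟨m, ⟨by exact_mod_cast hC.2, by exact_mod_cast hC.1⟩, rfl⟩

namespace Submodule

variable {X : Set E}

theorem exists_int_inner_left_of_mem_span_int {w : E} (hX : ∀ v ∈ X, ∃ m : ℤ, ⟪v, w⟫ = m)
    {x : E} (hx : x ∈ span ℤ X) : ∃ m : ℤ, ⟪x, w⟫ = m := by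
  induction hx using span_induction with
  | mem v hv => exact hX v hv
  | zero => exact ⟨0, by simp⟩
  | add a b _ _ ha hb =>
    obtain ⟨m, hm⟩ := ha
    obtain ⟨n, hn⟩ := hb
    exact ⟨m + n, by rw [inner_add_left, hm, hn, Int.cast_add]⟩
  | smul n a _ ha =>
    obtain ⟨m, hm⟩ := ha
    exact ⟨n * m, by rw [← Int.cast_smul_eq_zsmul ℝ, real_inner_smul_left, hm, Int.cast_mul]⟩

theorem exists_int_inner_of_mem_span_int (hX : ∀ v ∈ X, ∀ w ∈ X, ∃ m : ℤ, ⟪v, w⟫ = m)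
    {x y : E} (hx : x ∈ span ℤ X) (hy : y ∈ span ℤ X) : ∃ m : ℤ, ⟪x, y⟫ = m := by
  refine exists_int_inner_left_of_mem_span_int (fun v hv => ?_) hx
  obtain ⟨m, hm⟩ := exists_int_inner_left_of_mem_span_int (fun u hu => hX u hu v hv) hy
  exact ⟨m, by rw [real_inner_comm, hm]⟩

theorem injOn_inner_span : Set.InjOn (fun x (v : X) => ⟪x, (v : E)⟫) (span ℝ X) := by
  intro x hx y hy hxy
  have hortho : span ℝ X ⟂ span ℝ {x - y} := by
    refine isOrtho_span.mpr fun v hv u hu => ?_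
    rw [Set.mem_singleton_iff.mp hu, inner_sub_right, real_inner_comm x, real_inner_comm y,
      sub_eq_zero]
    exact congrFun hxy ⟨v, hv⟩
  exact sub_eq_zero.mp <| inner_self_eq_zero.mp <|
    hortho.inner_eq (sub_mem hx hy) (mem_span_singleton_self _)

theorem finite_setOf_mem_span_int_and_norm_le (hfin : X.Finite)
    (hX : ∀ v ∈ X, ∀ w ∈ X, ∃ m : ℤ, ⟪v, w⟫ = m) (r : ℝ) :
    {x | x ∈ span ℤ X ∧ ‖x‖ ≤ r}.Finite := by
  have : Finite X := hfin.to_subtype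
  refine Set.Finite.of_finite_image ?_ (injOn_inner_span.mono fun x hx =>
    span_le_restrictScalars ℤ ℝ X hx.1)
  refine (Set.Finite.pi (t := fun v : X => {t : ℝ | (∃ m : ℤ, t = m) ∧ |t| ≤ r * ‖(v : E)‖})
    fun v => finite_setOf_exists_intCast_eq_and_abs_le _).subset ?_
  rintro _ ⟨x, ⟨hx, hxr⟩, rfl⟩ v -
  exact ⟨exists_int_inner_of_mem_span_int hX hx (subset_span v.2),
    (abs_real_inner_le_norm x v).trans (by gcongr)⟩

end Submodule

theorem real_inner_self_sub_inner_smul_of_inner_self_eq_two (x : E) {y : E} (hy : ⟪y, y⟫ = 2) :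
    ⟪x - ⟪x, y⟫ • y, x - ⟪x, y⟫ • y⟫ = ⟪x, x⟫ := by
  simp only [inner_sub_left, inner_sub_right, real_inner_smul_left, real_inner_smul_right, hy,
    real_inner_comm x y]
  ring

theorem hat_isSLRS {X : Set E} (hfin : X.Finite) (hne : X.Nonempty)
    (hnorm : ∀ v ∈ X, ⟪v, v⟫ = 2)
    (hint : ∀ v ∈ X, ∀ w ∈ X, ∃ m : ℤ, ⟪v, w⟫ = (m : ℝ)) :
    IsSLRS {x : E | x ∈ Submodule.span ℤ X ∧ ⟪x, x⟫ = 2} := by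
  have hfinite : {x : E | x ∈ Submodule.span ℤ X ∧ ⟪x, x⟫ = 2}.Finite :=
    (Submodule.finite_setOf_mem_span_int_and_norm_le hfin hint √2).subset fun x hx =>
      ⟨hx.1, by rw [norm_eq_sqrt_real_inner, hx.2]⟩
  obtain ⟨v, hv⟩ := hne
  refine ⟨⟨v, Submodule.subset_span hv, hnorm v hv⟩, hfinite, ?_⟩
  rintro x ⟨hx, hxx⟩ y ⟨hy, hyy⟩
  obtain ⟨m, hm⟩ := Submodule.exists_int_inner_of_mem_span_int hint hx hy
  refine ⟨hxx, ⟨m, hm⟩, ?_, ?_⟩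
  · rw [hm, Int.cast_smul_eq_zsmul]
    exact sub_mem hx (zsmul_mem hy m)
  · rw [real_inner_self_sub_inner_smul_of_inner_self_eq_two x hyy, hxx]
end

section
/- If A is the adjacency matrix of a signed graph whose least eigenvalue is at least -2, then there exist vectors v₁,…,vₙ in a real inner product space with ‖vᵢ‖² = 2 and ⟨vᵢ,vⱼ⟩ ∈ ℤ such that A + 2I is the Gram matrix of (v₁,…,vₙ); consequently {v₁,…,vₙ} is contained in a simply laced root system. -/
open RealInnerProductSpace

variable {E : Type*} [NormedAddCommGroup E] [InnerProductSpace ℝ E]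

/-!
Because the least eigenvalue of `A` is at least `-2`, the matrix `A + 2I` is positive semidefinite,
hence the Gram matrix of some vectors `vᵢ ∈ ℝⁿ⁺¹`; its entries are integers and its diagonal is `2`.
Add a vector `e` orthogonal to all `vᵢ` with `⟪e, e⟫ = 2` (it keeps the root system nonempty when
`n = 0`). The additive subgroup `L` generated by `e` and the `vᵢ` has integer inner products, so
`{x ∈ L | ⟪x, x⟫ = 2}` is closed under the reflections `x ↦ x - ⟪x, y⟫ y`. It is finite because
a vector of `L` is determined by its inner products with the generators, and these are integers
bounded by Cauchy–Schwarz.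
-/

section Gram

variable {𝕜 F : Type*} [RCLike 𝕜] [NormedAddCommGroup F] [InnerProductSpace 𝕜 F]
  [FiniteDimensional 𝕜 F]

open scoped ComplexOrder MatrixOrder in
theorem Matrix.PosSemidef.exists_gram_eq {n : Type*} [Fintype n] {M : Matrix n n 𝕜}
    (hM : M.PosSemidef) (hcard : Fintype.card n ≤ Module.finrank 𝕜 F) :
    ∃ v : n → F, gram 𝕜 v = M := by
  classical
  obtain ⟨B, rfl⟩ := CStarAlgebra.nonneg_iff_eq_star_mul_self.mp hM.nonneg
  obtain ⟨f⟩ :=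
    Function.Embedding.nonempty_of_card_le (hcard.trans_eq (Fintype.card_fin _).symm)
  set u : n → F := stdOrthonormalBasis 𝕜 F ∘ f
  have hu : Orthonormal 𝕜 u := (stdOrthonormalBasis 𝕜 F).orthonormal.comp f f.injective
  refine ⟨fun j ↦ ∑ k, B k j • u k, Matrix.ext fun i j ↦ ?_⟩
  rw [gram_apply, hu.inner_sum]
  simp [mul_apply]

theorem exists_norm_eq_one_forall_inner_eq_zero {ι : Type*} [Fintype ι] (v : ι → F)
    (hcard : Fintype.card ι < Module.finrank 𝕜 F) :
    ∃ e : F, ‖e‖ = 1 ∧ ∀ i, inner 𝕜 (v i) e = 0 := by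
  set K := Submodule.span 𝕜 (Set.range v)
  have hK : Module.finrank 𝕜 K < Module.finrank 𝕜 F := (finrank_range_le_card v).trans_lt hcard
  have hKperp : Kᗮ ≠ ⊥ := by
    intro h
    have := K.finrank_add_finrank_orthogonal
    rw [h, finrank_bot] at this
    omega
  obtain ⟨u, hu, hu0⟩ := Submodule.exists_mem_ne_zero_of_ne_bot hKperp
  refine ⟨(‖u‖⁻¹ : 𝕜) • u, norm_smul_inv_norm hu0, fun i ↦ ?_⟩
  rw [inner_smul_right,
    K.inner_right_of_mem_orthogonal (Submodule.subset_span (Set.mem_range_self i)) hu, mul_zero]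

end Gram

section SignedGraph

variable {n : Type*} [DecidableEq n] {A : Matrix n n ℝ}

open Matrix in
theorem Matrix.posSemidef_add_smul_one [Fintype n] (hA : A.IsSymm) {c : ℝ}
    (hc : ∀ (μ : ℝ) (x : n → ℝ), x ≠ 0 → A *ᵥ x = μ • x → -c ≤ μ) :
    (A + c • 1).PosSemidef := by
  have hH : (A + c • 1).IsHermitian := by
    simp [IsHermitian, conjTranspose_eq_transpose_of_trivial, transpose_add, hA.eq]
  refine hH.posSemidef_iff_eigenvalues_nonneg.mpr fun i ↦ ?_
  set x : n → ℝ := ⇑(hH.eigenvectorBasis i)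
  have hx : x ≠ 0 := fun h ↦
    hH.eigenvectorBasis.orthonormal.ne_zero i (by ext k; exact congrFun h k)
  have hAx : A *ᵥ x = (hH.eigenvalues i - c) • x := by
    have := hH.mulVec_eigenvectorBasis i
    rw [add_mulVec, smul_mulVec, one_mulVec] at this
    rw [sub_smul, ← this, add_sub_cancel_right]
  simpa using hc _ x hx hAx

theorem Matrix.add_two_smul_one_apply_self (hdiag : ∀ i, A i i = 0) (i : n) :
    (A + 2 • (1 : Matrix n n ℝ)) i i = 2 := by
  simp [hdiag, Matrix.ofNat_apply]

theorem Matrix.exists_intCast_add_two_smul_one_apply {i j : n} (h : ∃ m : ℤ, A i j = m) :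
    ∃ m : ℤ, (A + 2 • (1 : Matrix n n ℝ)) i j = m := by
  obtain ⟨m, hm⟩ := h
  rcases eq_or_ne i j with rfl | hij
  · exact ⟨m + 2, by simp [hm, Matrix.ofNat_apply]⟩
  · exact ⟨m, by simp [hm, hij, Matrix.ofNat_apply]⟩

end SignedGraph

theorem exists_int_inner_of_mem_closure {S : Set E}
    (hS : ∀ x ∈ S, ∀ y ∈ S, ∃ m : ℤ, ⟪x, y⟫ = m) {x y : E}
    (hx : x ∈ AddSubgroup.closure S) (hy : y ∈ AddSubgroup.closure S) :
    ∃ m : ℤ, ⟪x, y⟫ = m := by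
  induction hx, hy using AddSubgroup.closure_induction₂ with
  | mem x y hx hy => exact hS x hx y hy
  | zero_left => exact ⟨0, by simp⟩
  | zero_right => exact ⟨0, by simp⟩
  | add_left x y z _ _ _ hxz hyz =>
    obtain ⟨a, ha⟩ := hxz
    obtain ⟨b, hb⟩ := hyz
    exact ⟨a + b, by simp [inner_add_left, ha, hb]⟩
  | add_right x y z _ _ _ hxy hxz =>
    obtain ⟨a, ha⟩ := hxy
    obtain ⟨b, hb⟩ := hxz
    exact ⟨a + b, by simp [inner_add_right, ha, hb]⟩
  | neg_left x y _ _ hxy =>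
    obtain ⟨a, ha⟩ := hxy
    exact ⟨-a, by simp [inner_neg_left, ha]⟩
  | neg_right x y _ _ hxy =>
    obtain ⟨a, ha⟩ := hxy
    exact ⟨-a, by simp [inner_neg_right, ha]⟩

theorem eq_of_mem_span_of_forall_inner_eq {S : Set E} {x y : E} (hx : x ∈ Submodule.span ℝ S)
    (hy : y ∈ Submodule.span ℝ S) (h : ∀ s ∈ S, ⟪x, s⟫ = ⟪y, s⟫) : x = y := by
  have hker : Submodule.span ℝ S ≤ LinearMap.ker (innerₗ E (x - y)) :=
    Submodule.span_le.mpr fun s hs ↦ by simp [h s hs]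
  have := hker (Submodule.sub_mem _ hx hy)
  rwa [LinearMap.mem_ker, innerₗ_apply_apply, inner_self_eq_zero, sub_eq_zero] at this

theorem Real.finite_setOf_intCast_abs_le (c : ℝ) :
    {r : ℝ | (∃ m : ℤ, r = m) ∧ |r| ≤ c}.Finite := by
  refine ((Set.finite_Icc (-⌈c⌉) ⌈c⌉).image ((↑) : ℤ → ℝ)).subset ?_
  rintro _ ⟨⟨m, rfl⟩, hm⟩
  have := abs_le.mp (hm.trans (Int.le_ceil c))
  exact ⟨m, ⟨by exact_mod_cast this.1, by exact_mod_cast this.2⟩, rfl⟩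

def latticeRoots (S : Set E) : Set E := {x | x ∈ AddSubgroup.closure S ∧ ⟪x, x⟫ = 2}

section latticeRoots

variable {S : Set E}

theorem subset_latticeRoots (hS : ∀ x ∈ S, ⟪x, x⟫ = 2) : S ⊆ latticeRoots S :=
  fun x hx ↦ ⟨AddSubgroup.subset_closure hx, hS x hx⟩

theorem finite_latticeRoots (hfin : S.Finite) (hint : ∀ x ∈ S, ∀ y ∈ S, ∃ m : ℤ, ⟪x, y⟫ = m) :
    (latticeRoots S).Finite := by
  have := hfin.to_subtype
  set f : E → S → ℝ := fun x s ↦ ⟪x, s⟫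
  have hspan : AddSubgroup.closure S ≤ (Submodule.span ℝ S).toAddSubgroup :=
    (AddSubgroup.closure_le _).mpr Submodule.subset_span
  have hinj : Set.InjOn f (latticeRoots S) := fun x hx y hy hxy ↦
    eq_of_mem_span_of_forall_inner_eq (hspan hx.1) (hspan hy.1) fun s hs ↦ congrFun hxy ⟨s, hs⟩
  have hbound : Set.Finite {g : S → ℝ | ∀ s, g s ∈ {r : ℝ | (∃ m : ℤ, r = m) ∧ |r| ≤ 2 * ‖s.1‖}} :=
    Set.Finite.pi' fun s ↦ Real.finite_setOf_intCast_abs_le _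
  refine Set.Finite.of_finite_image (hbound.subset ?_) hinj
  rintro _ ⟨x, ⟨hxS, hx2⟩, rfl⟩ s
  refine ⟨exists_int_inner_of_mem_closure hint hxS (AddSubgroup.subset_closure s.2), ?_⟩
  have hx : ‖x‖ ≤ 2 := by nlinarith [norm_nonneg x, real_inner_self_eq_norm_sq x]
  exact (abs_real_inner_le_norm x s).trans (mul_le_mul_of_nonneg_right hx (norm_nonneg _))

theorem isSLRS_latticeRoots (hfin : S.Finite) (hint : ∀ x ∈ S, ∀ y ∈ S, ∃ m : ℤ, ⟪x, y⟫ = m)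
    (hne : (latticeRoots S).Nonempty) : IsSLRS (latticeRoots S) := by
  refine ⟨hne, finite_latticeRoots hfin hint, ?_⟩
  rintro x ⟨hxS, hx2⟩ y ⟨hyS, hy2⟩
  obtain ⟨m, hm⟩ := exists_int_inner_of_mem_closure hint hxS hyS
  refine ⟨hx2, ⟨m, hm⟩, ?_, ?_⟩
  · rw [hm, Int.cast_smul_eq_zsmul]
    exact sub_mem hxS (zsmul_mem hyS m)
  · simp only [inner_sub_left, inner_sub_right, real_inner_smul_left, real_inner_smul_right,
      real_inner_comm x y, hx2, hy2]
    ring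

end latticeRoots

theorem exists_isSLRS_range_subset {ι : Type*} [Finite ι] {v : ι → E}
    (hv2 : ∀ i, ⟪v i, v i⟫ = 2) (hvint : ∀ i j, ∃ m : ℤ, ⟪v i, v j⟫ = m) {e : E}
    (he : ⟪e, e⟫ = 2) (hve : ∀ i, ⟪v i, e⟫ = 0) :
    ∃ Φ : Set E, IsSLRS Φ ∧ Set.range v ⊆ Φ := by
  set S := insert e (Set.range v)
  have hS2 : ∀ x ∈ S, ⟪x, x⟫ = 2 := by
    rintro _ (rfl | ⟨i, rfl⟩)
    exacts [he, hv2 i]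
  have hSint : ∀ x ∈ S, ∀ y ∈ S, ∃ m : ℤ, ⟪x, y⟫ = m := by
    rintro _ (rfl | ⟨i, rfl⟩) _ (rfl | ⟨j, rfl⟩)
    · exact ⟨2, by rw [he, Int.cast_ofNat]⟩
    · exact ⟨0, by rw [real_inner_comm, hve, Int.cast_zero]⟩
    · exact ⟨0, by rw [hve, Int.cast_zero]⟩
    · exact hvint i j
  exact ⟨latticeRoots S,
    isSLRS_latticeRoots ((Set.finite_range v).insert e) hSint
      ⟨e, subset_latticeRoots hS2 (Set.mem_insert _ _)⟩,
    (Set.subset_insert _ _).trans (subset_latticeRoots hS2)⟩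

theorem signed_graph_gram {n : ℕ} (A : Matrix (Fin n) (Fin n) ℝ)
    (hsym : A.IsSymm) (hdiag : ∀ i, A i i = 0)
    (hentries : ∀ i j, A i j = -1 ∨ A i j = 0 ∨ A i j = 1)
    (hmin : ∀ (μ : ℝ) (x : Fin n → ℝ), x ≠ 0 → A.mulVec x = μ • x → -2 ≤ μ) :
    ∃ v : Fin n → EuclideanSpace ℝ (Fin (n + 1)),
      (∀ i, ⟪v i, v i⟫ = 2) ∧
      (∀ i j, ∃ m : ℤ, ⟪v i, v j⟫ = (m : ℝ)) ∧
      (∀ i j, (A + 2 • (1 : Matrix (Fin n) (Fin n) ℝ)) i j = ⟪v i, v j⟫) ∧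
      ∃ Φ : Set (EuclideanSpace ℝ (Fin (n + 1))), IsSLRS Φ ∧ Set.range v ⊆ Φ := by
  obtain ⟨v, hv⟩ := (Matrix.posSemidef_add_smul_one hsym hmin).exists_gram_eq
    (F := EuclideanSpace ℝ (Fin (n + 1))) (by simp)
  rw [ofNat_smul_eq_nsmul] at hv
  have hgram (i j : Fin n) : (A + 2 • (1 : Matrix (Fin n) (Fin n) ℝ)) i j = ⟪v i, v j⟫ := by
    rw [← hv, Matrix.gram_apply]
  have hv2 (i : Fin n) : ⟪v i, v i⟫ = 2 :=
    (hgram i i).symm.trans (Matrix.add_two_smul_one_apply_self hdiag i)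
  have hvint (i j : Fin n) : ∃ m : ℤ, ⟪v i, v j⟫ = m := by
    rw [← hgram]
    apply Matrix.exists_intCast_add_two_smul_one_apply
    rcases hentries i j with h | h | h
    exacts [⟨-1, by simp [h]⟩, ⟨0, by simp [h]⟩, ⟨1, by simp [h]⟩]
  obtain ⟨e, he, hve⟩ := exists_norm_eq_one_forall_inner_eq_zero (𝕜 := ℝ) v (by simp)
  have he2 : ⟪√2 • e, √2 • e⟫ = 2 := by
    rw [real_inner_smul_left, real_inner_smul_right, real_inner_self_eq_norm_sq, he]
    norm_num
  refine ⟨v, hv2, hvint, hgram, exists_isSLRS_range_subset hv2 hvint he2 fun i ↦ ?_⟩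
  rw [real_inner_smul_right, hve, mul_zero]
end
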